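/- arXiv:math/0212258 — 4 statements merged into one kernel-verified Lean document; each statement's English description precedes it below -/
import Mathlib

section
/- If r ∈ A⊗A is a constant solution of the CYBE, then r̂(v) = (r + e^v·r^{21})/(1 − e^v) is a unitary solution of the CYBE with spectral parameter: [r̂^{12}(v), r̂^{13}(v+v′)] + [r̂^{12}(v), r̂^{23}(v′)] + [r̂^{13}(v+v′), r̂^{23}(v′)] = 0 for all v, v′ ∈ ℂ with e^v ≠ 1, e^{v′} ≠ 1, e^{v+v′} ≠ 1, and r̂^{21}(−v) = −r̂(v) whenever e^v ≠ 1. -/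
open Complex

/-- `Matₙ(ℂ)` -/
abbrev M1 (n : ℕ) := Matrix (Fin n) (Fin n) ℂ
/-- `Matₙ ⊗ Matₙ`, realized as matrices indexed by pairs (Kronecker indexing). -/
abbrev M2 (n : ℕ) := Matrix (Fin n × Fin n) (Fin n × Fin n) ℂ
/-- `Matₙ ⊗ Matₙ ⊗ Matₙ`. -/
abbrev M3 (n : ℕ) := Matrix (Fin n × Fin n × Fin n) (Fin n × Fin n × Fin n) ℂ

/-- matrix unit `e_{ij}` (ℕ-indexed, zero if out of range) -/
def Eu (n : ℕ) (i j : ℕ) : M1 n := fun a b => if (a : ℕ) = i ∧ (b : ℕ) = j then 1 else 0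

/-- Kronecker/tensor product of two matrices: `a ⊗ b`. -/
def tens {n : ℕ} (a b : M1 n) : M2 n := fun p q => a p.1 q.1 * b p.2 q.2

/-- `x ↦ x^{12}` -/
def emb12 {n : ℕ} (x : M2 n) : M3 n :=
  fun p q => x (p.1, p.2.1) (q.1, q.2.1) * (if p.2.2 = q.2.2 then 1 else 0)
/-- `x ↦ x^{13}` -/
def emb13 {n : ℕ} (x : M2 n) : M3 n :=
  fun p q => x (p.1, p.2.2) (q.1, q.2.2) * (if p.2.1 = q.2.1 then 1 else 0)
/-- `x ↦ x^{23}` -/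
def emb23 {n : ℕ} (x : M2 n) : M3 n :=
  fun p q => x (p.2.1, p.2.2) (q.2.1, q.2.2) * (if p.1 = q.1 then 1 else 0)
/-- `x ↦ x^{21}` (flip of the two tensor factors) -/
def flipT {n : ℕ} (x : M2 n) : M2 n := fun p q => x (p.2, p.1) (q.2, q.1)

/-- The permutation matrix `P = Σ_{i,j} e_{ij} ⊗ e_{ji}`. -/
def Pmat (n : ℕ) : M2 n := fun p q => if p.1 = q.2 ∧ p.2 = q.1 then 1 else 0

/-- Left-hand side of the AYBE with two spectral parameters. -/
noncomputable def aybeLHS {n : ℕ} (r : ℂ → ℂ → M2 n) (u u' v v' : ℂ) : M3 n :=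
  emb12 (r (-u') v) * emb13 (r (u + u') (v + v'))
    - emb23 (r (u + u') v') * emb12 (r u v)
    + emb13 (r u (v + v')) * emb23 (r u' v')

/-- Left-hand side of the CYBE with spectral parameter. -/
noncomputable def cybeLHS {n : ℕ} (f : ℂ → M2 n) (v v' : ℂ) : M3 n :=
  (emb12 (f v) * emb13 (f (v + v')) - emb13 (f (v + v')) * emb12 (f v))
    + (emb12 (f v) * emb23 (f v') - emb23 (f v') * emb12 (f v))
    + (emb13 (f (v + v')) * emb23 (f v') - emb23 (f v') * emb13 (f (v + v')))


def sw12 (n : ℕ) : (Fin n × Fin n × Fin n) ≃ (Fin n × Fin n × Fin n) :=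
  ⟨fun p => (p.2.1, p.1, p.2.2), fun p => (p.2.1, p.1, p.2.2), fun _ => rfl, fun _ => rfl⟩
def sw13 (n : ℕ) : (Fin n × Fin n × Fin n) ≃ (Fin n × Fin n × Fin n) :=
  ⟨fun p => (p.2.2, p.2.1, p.1), fun p => (p.2.2, p.2.1, p.1), fun _ => rfl, fun _ => rfl⟩
def sw23 (n : ℕ) : (Fin n × Fin n × Fin n) ≃ (Fin n × Fin n × Fin n) :=
  ⟨fun p => (p.1, p.2.2, p.2.1), fun p => (p.1, p.2.2, p.2.1), fun _ => rfl, fun _ => rfl⟩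

@[simp] lemma sub12_12 {n : ℕ} (x : M2 n) : (emb12 x).submatrix (sw12 n) (sw12 n) = emb12 (flipT x) := rfl
@[simp] lemma sub12_13 {n : ℕ} (x : M2 n) : (emb13 x).submatrix (sw12 n) (sw12 n) = emb23 x := rfl
@[simp] lemma sub12_23 {n : ℕ} (x : M2 n) : (emb23 x).submatrix (sw12 n) (sw12 n) = emb13 x := rfl
@[simp] lemma sub13_12 {n : ℕ} (x : M2 n) : (emb12 x).submatrix (sw13 n) (sw13 n) = emb23 (flipT x) := rfl
@[simp] lemma sub13_13 {n : ℕ} (x : M2 n) : (emb13 x).submatrix (sw13 n) (sw13 n) = emb13 (flipT x) := rfl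
@[simp] lemma sub13_23 {n : ℕ} (x : M2 n) : (emb23 x).submatrix (sw13 n) (sw13 n) = emb12 (flipT x) := rfl
@[simp] lemma sub23_12 {n : ℕ} (x : M2 n) : (emb12 x).submatrix (sw23 n) (sw23 n) = emb13 x := rfl
@[simp] lemma sub23_13 {n : ℕ} (x : M2 n) : (emb13 x).submatrix (sw23 n) (sw23 n) = emb12 x := rfl
@[simp] lemma sub23_23 {n : ℕ} (x : M2 n) : (emb23 x).submatrix (sw23 n) (sw23 n) = emb23 (flipT x) := rfl
@[simp] lemma flipT_flipT {n : ℕ} (x : M2 n) : flipT (flipT x) = x := rfl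

lemma submul {n : ℕ} (X Y : M3 n) (e : (Fin n × Fin n × Fin n) ≃ (Fin n × Fin n × Fin n)) :
    (X * Y).submatrix e e = X.submatrix e e * Y.submatrix e e :=
  (Matrix.submatrix_mul_equiv X Y e e e).symm

@[simp] lemma emb12_add {n : ℕ} (x y : M2 n) : emb12 (x + y) = emb12 x + emb12 y := by
  ext p q; simp [emb12, Matrix.add_apply, add_mul]; split <;> simp
@[simp] lemma emb13_add {n : ℕ} (x y : M2 n) : emb13 (x + y) = emb13 x + emb13 y := by
  ext p q; simp [emb13, Matrix.add_apply, add_mul]; split <;> simp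
@[simp] lemma emb23_add {n : ℕ} (x y : M2 n) : emb23 (x + y) = emb23 x + emb23 y := by
  ext p q; simp [emb23, Matrix.add_apply, add_mul]; split <;> simp
@[simp] lemma emb12_smul {n : ℕ} (c : ℂ) (x : M2 n) : emb12 (c • x) = c • emb12 x := by
  ext p q; simp [emb12, Matrix.smul_apply, mul_assoc]
@[simp] lemma emb13_smul {n : ℕ} (c : ℂ) (x : M2 n) : emb13 (c • x) = c • emb13 x := by
  ext p q; simp [emb13, Matrix.smul_apply, mul_assoc]
@[simp] lemma emb23_smul {n : ℕ} (c : ℂ) (x : M2 n) : emb23 (c • x) = c • emb23 x := by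
  ext p q; simp [emb23, Matrix.smul_apply, mul_assoc]



set_option maxHeartbeats 2000000 in
/-- If `r` is a constant solution of the CYBE over `A = Matₙ(ℂ)`, then
`r̂(v) = (r + e^v r^{21})/(1 - e^v)` is a unitary solution of the CYBE with spectral
parameter, wherever it is defined. -/
theorem trig_cybe_from_constant (n : ℕ) (hn : 2 ≤ n) (r : M2 n)
    (hCYBE :
      (emb12 r * emb13 r - emb13 r * emb12 r)
        + (emb12 r * emb23 r - emb23 r * emb12 r)
        + (emb13 r * emb23 r - emb23 r * emb13 r) = 0)
    (rhat : ℂ → M2 n)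
    (hrhat : ∀ v : ℂ, rhat v = (1 - Complex.exp v)⁻¹ • (r + Complex.exp v • flipT r)) :
    (∀ v v' : ℂ, Complex.exp v ≠ 1 → Complex.exp v' ≠ 1 → Complex.exp (v + v') ≠ 1 →
        cybeLHS rhat v v' = 0) ∧
    (∀ v : ℂ, Complex.exp v ≠ 1 → flipT (rhat (-v)) = - rhat v) := by
  constructor
  · intro v v' hv hv' hvv
    have perm : ∀ (e : (Fin n × Fin n × Fin n) ≃ (Fin n × Fin n × Fin n)) (X1 X2 X3 X4 X5 X6 : M3 n),
        (X1 * X2 - X2 * X1) + (X3 * X4 - X4 * X3) + (X5 * X6 - X6 * X5) = 0 →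
        (X1.submatrix e e * X2.submatrix e e - X2.submatrix e e * X1.submatrix e e)
          + (X3.submatrix e e * X4.submatrix e e - X4.submatrix e e * X3.submatrix e e)
          + (X5.submatrix e e * X6.submatrix e e - X6.submatrix e e * X5.submatrix e e) = 0 := by
      intro e X1 X2 X3 X4 X5 X6 h
      have h' := congrArg (Matrix.reindexAlgEquiv ℂ ℂ e.symm) h
      simp only [map_add, map_sub, map_mul, map_zero, Matrix.reindexAlgEquiv_apply,
        Matrix.reindex_apply, Equiv.symm_symm] at h'
      exact h'
    have h1 := perm (sw12 n) _ _ _ _ _ _ hCYBE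
    simp only [sub12_12, sub12_13, sub12_23] at h1
    have h2 := perm (sw13 n) _ _ _ _ _ _ hCYBE
    simp only [sub13_12, sub13_13, sub13_23] at h2
    have h3 := perm (sw23 n) _ _ _ _ _ _ hCYBE
    simp only [sub23_12, sub23_13, sub23_23] at h3
    have h4 := perm (sw23 n) _ _ _ _ _ _ h1
    simp only [sub23_12, sub23_13, sub23_23, flipT_flipT] at h4
    have h5 := perm (sw13 n) _ _ _ _ _ _ h1
    simp only [sub13_12, sub13_13, sub13_23, flipT_flipT] at h5
    have hx : (1 : ℂ) - Complex.exp v ≠ 0 := sub_ne_zero.mpr (Ne.symm hv)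
    have hy : (1 : ℂ) - Complex.exp v' ≠ 0 := sub_ne_zero.mpr (Ne.symm hv')
    have hxy : (1 : ℂ) - Complex.exp v * Complex.exp v' ≠ 0 := by
      rw [← Complex.exp_add]; exact sub_ne_zero.mpr (Ne.symm hvv)
    have comb : cybeLHS rhat v v' =
        ((1 - Complex.exp v)⁻¹ * (1 - Complex.exp v')⁻¹) •
          ((emb12 r * emb13 r - emb13 r * emb12 r)
          + (emb12 r * emb23 r - emb23 r * emb12 r)
          + (emb13 r * emb23 r - emb23 r * emb13 r))
        + ((1 - Complex.exp v)⁻¹ * Complex.exp v * (1 - Complex.exp v * Complex.exp v')⁻¹) •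
          ((emb12 (flipT r) * emb23 r - emb23 r * emb12 (flipT r))
          + (emb12 (flipT r) * emb13 r - emb13 r * emb12 (flipT r))
          + (emb23 r * emb13 r - emb13 r * emb23 r))
        - ((1 - Complex.exp v)⁻¹ * Complex.exp v * ((1 - Complex.exp v')⁻¹ * Complex.exp v')) •
          ((emb23 (flipT r) * emb13 (flipT r) - emb13 (flipT r) * emb23 (flipT r))
          + (emb23 (flipT r) * emb12 (flipT r) - emb12 (flipT r) * emb23 (flipT r))
          + (emb13 (flipT r) * emb12 (flipT r) - emb12 (flipT r) * emb13 (flipT r)))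
        + ((1 - Complex.exp v * Complex.exp v')⁻¹ * ((1 - Complex.exp v')⁻¹ * Complex.exp v')) •
          ((emb13 r * emb12 r - emb12 r * emb13 r)
          + (emb13 r * emb23 (flipT r) - emb23 (flipT r) * emb13 r)
          + (emb12 r * emb23 (flipT r) - emb23 (flipT r) * emb12 r))
        - ((1 - Complex.exp v * Complex.exp v')⁻¹ * (Complex.exp v * Complex.exp v') * (1 - Complex.exp v')⁻¹) •
          ((emb23 r * emb12 (flipT r) - emb12 (flipT r) * emb23 r)
          + (emb23 r * emb13 (flipT r) - emb13 (flipT r) * emb23 r)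
          + (emb12 (flipT r) * emb13 (flipT r) - emb13 (flipT r) * emb12 (flipT r)))
        - ((1 - Complex.exp v)⁻¹ * ((1 - Complex.exp v * Complex.exp v')⁻¹ * (Complex.exp v * Complex.exp v'))) •
          ((emb13 (flipT r) * emb23 (flipT r) - emb23 (flipT r) * emb13 (flipT r))
          + (emb13 (flipT r) * emb12 r - emb12 r * emb13 (flipT r))
          + (emb23 (flipT r) * emb12 r - emb12 r * emb23 (flipT r))) := by
      unfold cybeLHS
      rw [hrhat v, hrhat v', hrhat (v + v'), Complex.exp_add]
      simp only [emb12_add, emb12_smul, emb13_add, emb13_smul, emb23_add, emb23_smul,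
        smul_add, smul_smul, mul_add, add_mul, smul_mul_assoc, mul_smul_comm]
      have hyx : (1 : ℂ) - Complex.exp v' * Complex.exp v ≠ 0 := by rw [mul_comm]; exact hxy
      match_scalars <;> field_simp <;> ring
    rw [comb, hCYBE, h1, h2, h3, h5, h4]
    simp
  · intro v hv
    have hx : Complex.exp v ≠ 0 := Complex.exp_ne_zero v
    have h1 : (1 : ℂ) - Complex.exp v ≠ 0 := sub_ne_zero.mpr (Ne.symm hv)
    have h2 : (1 : ℂ) - (Complex.exp v)⁻¹ ≠ 0 := by
      rw [sub_ne_zero]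
      intro h
      exact hv (inv_eq_one.mp h.symm)
    have h1' : Complex.exp v - 1 ≠ 0 := sub_ne_zero.mpr hv
    have e1 : (1 : ℂ) - (Complex.exp v)⁻¹ = -(Complex.exp v)⁻¹ * (1 - Complex.exp v) := by
      field_simp; ring
    have key : (1 - (Complex.exp v)⁻¹)⁻¹ = -(Complex.exp v * (1 - Complex.exp v)⁻¹) := by
      rw [e1, mul_inv, inv_neg, inv_inv, neg_mul]
    ext p q
    simp only [hrhat, flipT, Matrix.smul_apply, Matrix.add_apply, Matrix.neg_apply,
      Complex.exp_neg, smul_eq_mul, key]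
    field_simp
    ring
end

section
/- If r : ℂ×ℂ → A⊗A is a unitary solution of the AYBE, then it satisfies the commutator identity [r^{12}(−u′,v), r^{13}(u+u′,v+v′)] + [r^{12}(u,v), r^{23}(u+u′,v′)] + [r^{13}(u,v+v′), r^{23}(u′,v′)] = 0 for all u, u′, v, v′ ∈ ℂ. -/
open Complex

/-- unitarity for a two-parameter `r`: `r^{21}(-u,-v) = -r(u,v)` -/
def Unitary2 {n : ℕ} (r : ℂ → ℂ → M2 n) : Prop :=
  ∀ u v : ℂ, flipT (r (-u) (-v)) = - r u v


/-- the flip of the first and third tensor factors on `M3` -/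
def S3 {n : ℕ} (x : M3 n) : M3 n :=
  fun p q => x (p.2.2, p.2.1, p.1) (q.2.2, q.2.1, q.1)

def rev3 (n : ℕ) : (Fin n × Fin n × Fin n) ≃ (Fin n × Fin n × Fin n) :=
  ⟨fun a => (a.2.2, a.2.1, a.1), fun a => (a.2.2, a.2.1, a.1), fun _ => rfl, fun _ => rfl⟩

lemma S3_mul {n : ℕ} (x y : M3 n) : S3 (x * y) = S3 x * S3 y := by
  ext p q
  simp only [S3, Matrix.mul_apply]
  exact Fintype.sum_equiv (rev3 n) _ _ (fun a => rfl)

lemma emb12_neg {n : ℕ} (x : M2 n) : emb12 (-x) = -(emb12 x) := by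
  ext p q; simp only [emb12, Matrix.neg_apply, neg_mul]

lemma emb13_neg {n : ℕ} (x : M2 n) : emb13 (-x) = -(emb13 x) := by
  ext p q; simp only [emb13, Matrix.neg_apply, neg_mul]

lemma emb23_neg {n : ℕ} (x : M2 n) : emb23 (-x) = -(emb23 x) := by
  ext p q; simp only [emb23, Matrix.neg_apply, neg_mul]

/-- A unitary solution of the AYBE satisfies the commutator identity
`[r^{12}(-u',v), r^{13}(u+u',v+v')] + [r^{12}(u,v), r^{23}(u+u',v')]
  + [r^{13}(u,v+v'), r^{23}(u',v')] = 0`. -/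
theorem aybe_commutator_identity (n : ℕ) (hn : 2 ≤ n) (r : ℂ → ℂ → M2 n)
    (hAYBE : ∀ u u' v v' : ℂ, aybeLHS r u u' v v' = 0)
    (hUnit : Unitary2 r) :
    ∀ u u' v v' : ℂ,
      (emb12 (r (-u') v) * emb13 (r (u + u') (v + v'))
          - emb13 (r (u + u') (v + v')) * emb12 (r (-u') v))
        + (emb12 (r u v) * emb23 (r (u + u') v')
          - emb23 (r (u + u') v') * emb12 (r u v))
        + (emb13 (r u (v + v')) * emb23 (r u' v')
          - emb23 (r u' v') * emb13 (r u (v + v'))) = 0 := by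
  intro u u' v v'
  have h1 := hAYBE u u' v v'
  unfold aybeLHS at h1
  have h2 := hAYBE (-(u + u')) u' (-v') (-v)
  unfold aybeLHS at h2
  rw [show -(u + u') + u' = -u by ring, show -v' + -v = -(v + v') by ring] at h2
  have h3 := congrArg S3 h2
  have e12 : ∀ x : M2 n, S3 (emb12 x) = emb23 (flipT x) := fun _ => rfl
  have e13 : ∀ x : M2 n, S3 (emb13 x) = emb13 (flipT x) := fun _ => rfl
  have e23 : ∀ x : M2 n, S3 (emb23 x) = emb12 (flipT x) := fun _ => rfl
  have hadd : ∀ x y : M3 n, S3 (x + y) = S3 x + S3 y := fun _ _ => rfl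
  have hsub : ∀ x y : M3 n, S3 (x - y) = S3 x - S3 y := fun _ _ => rfl
  rw [hadd, hsub, S3_mul, S3_mul, S3_mul, e12, e13, e23, e12, e13, e23,
    show S3 (0 : M3 n) = 0 from rfl] at h3
  have u1 : flipT (r (-u') (-v')) = -(r u' v') := hUnit u' v'
  have u2 : flipT (r (-u) (-(v + v'))) = -(r u (v + v')) := hUnit u (v + v')
  have u3 : flipT (r (-u) (-v)) = -(r u v) := hUnit u v
  have u4 : flipT (r (-(u + u')) (-v')) = -(r (u + u') v') := hUnit (u + u') v'
  have u5 : flipT (r (-(u + u')) (-(v + v'))) = -(r (u + u') (v + v')) := hUnit (u + u') (v + v')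
  have u6 : flipT (r u' (-v)) = -(r (-u') v) := by
    have := hUnit (-u') v; rwa [neg_neg] at this
  rw [u1, u2, u3, u4, u5, u6, emb12_neg, emb13_neg, emb23_neg, emb12_neg, emb13_neg,
    emb23_neg, neg_mul_neg, neg_mul_neg, neg_mul_neg] at h3
  have key : (emb12 (r (-u') v) * emb13 (r (u + u') (v + v'))
          - emb13 (r (u + u') (v + v')) * emb12 (r (-u') v))
        + (emb12 (r u v) * emb23 (r (u + u') v')
          - emb23 (r (u + u') v') * emb12 (r u v))
        + (emb13 (r u (v + v')) * emb23 (r u' v')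
          - emb23 (r u' v') * emb13 (r u (v + v')))
      = (emb12 (r (-u') v) * emb13 (r (u + u') (v + v'))
          - emb23 (r (u + u') v') * emb12 (r u v)
          + emb13 (r u (v + v')) * emb23 (r u' v'))
        - (emb23 (r u' v') * emb13 (r u (v + v'))
          - emb12 (r u v) * emb23 (r (u + u') v')
          + emb13 (r (u + u') (v + v')) * emb12 (r (-u') v)) := by abel
  rw [key, h1, h3, sub_zero]
end

section
/- Let (Γ_1,Γ_2,T) be a BD triple and s ∈ h∧h admissible. Then for all positive roots α ≺ β, PS(α,β) = 1 − (α⊗β)s, where (α⊗β)s denotes the contraction of s ∈ h⊗h against the linear functionals α and β on the two tensor factors. -/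
open Complex

/-! ### Belavin–Drinfeld combinatorics (0-based indexing: simple roots `α_a = e_a - e_{a+1}`,
`a ∈ {0,…,n-2}`; the positive root `e_i - e_j` (`i < j < n`) is encoded by the pair `(i,j)`). -/

/-- inner product of simple roots `α_a, α_b` in type `A`. -/
def ipS (a b : ℕ) : ℤ := if a = b then 2 else if a + 1 = b ∨ b + 1 = a then -1 else 0

/-- A Belavin–Drinfeld triple `(Γ₁, Γ₂, T)` of type `A_{n-1}` (simple roots 0-based). -/
structure BDTriple (n : ℕ) where
  G1 : Finset ℕ
  G2 : Finset ℕ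
  hG1 : ∀ a ∈ G1, a + 1 < n
  hG2 : ∀ a ∈ G2, a + 1 < n
  T : ℕ → ℕ
  Tmem : ∀ a ∈ G1, T a ∈ G2
  Tinj : ∀ a ∈ G1, ∀ b ∈ G1, T a = T b → a = b
  Tsurj : ∀ b ∈ G2, ∃ a ∈ G1, T a = b
  Tip : ∀ a ∈ G1, ∀ b ∈ G1, ipS (T a) (T b) = ipS a b
  Tnil : ∀ a ∈ G1, ∃ k : ℕ, T^[k] a ∉ G1

/-- `(i,j)` encodes the positive root `e_i - e_j`. -/
def IsRoot (n : ℕ) (p : ℕ × ℕ) : Prop := p.1 < p.2 ∧ p.2 < n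

/-- One application of (the additive extension of) `T` sends the root `p` to the root `q`:
all simple constituents of `p` lie in `Γ₁` and their `T`-images form the segment of `q`. -/
def step {n : ℕ} (D : BDTriple n) (p q : ℕ × ℕ) : Prop :=
  IsRoot n p ∧ IsRoot n q ∧ (Finset.Ico p.1 p.2 ⊆ D.G1) ∧
    Finset.image D.T (Finset.Ico p.1 p.2) = Finset.Ico q.1 q.2

/-- `stepIter D k p q` means `T^k p = q` (all intermediate iterates being defined). -/
def stepIter {n : ℕ} (D : BDTriple n) : ℕ → ℕ × ℕ → ℕ × ℕ → Prop
  | 0, p, q => p = q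
  | k + 1, p, q => ∃ r, step D p r ∧ stepIter D k r q

/-- `α ≺ β` : `T^k α = β` for some `k ≥ 1`. -/
def prec {n : ℕ} (D : BDTriple n) (p q : ℕ × ℕ) : Prop := ∃ k : ℕ, stepIter D (k + 1) p q

/-- a single oriented step: `c = false` if `T` preserves orientation on `p`
(`T` sends the leftmost simple root of `p` to the leftmost one of `q`), `c = true` if
it reverses orientation. -/
def stepO {n : ℕ} (D : BDTriple n) (p q : ℕ × ℕ) (c : Bool) : Prop :=
  step D p q ∧ (if c then D.T p.1 = q.2 - 1 else D.T p.1 = q.1)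

/-- `stepIterO D k p q c` : `T^k p = q`, with total orientation reversal given by `c`. -/
def stepIterO {n : ℕ} (D : BDTriple n) : ℕ → ℕ × ℕ → ℕ × ℕ → Bool → Prop
  | 0, p, q, c => p = q ∧ c = false
  | k + 1, p, q, c => ∃ r b d, stepO D p r b ∧ stepIterO D k r q d ∧ c = xor b d

/-- the triple preserves orientation: `C_{α,β} = 0` for all `α ≺ β`. -/
def OrientPres {n : ℕ} (D : BDTriple n) : Prop :=
  ∀ p q : ℕ × ℕ, ∀ k : ℕ, stepIter D (k + 1) p q → stepIterO D (k + 1) p q false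

/-- a choice `CC` of the orientation data `C_{α,β}` for all `α ≺ β`. -/
def CCSpec {n : ℕ} (D : BDTriple n) (CC : ℕ × ℕ → ℕ × ℕ → Bool) : Prop :=
  ∀ p q : ℕ × ℕ, prec D p q → ∃ k : ℕ, 1 ≤ k ∧ stepIterO D k p q (CC p q)

/-- `C_{α,β}·(|α|-1)` as a natural number, given the orientation data `CC`. -/
def Cnum (CC : ℕ × ℕ → ℕ × ℕ → Bool) (p q : ℕ × ℕ) : ℕ :=
  cond (CC p q) (p.2 - p.1 - 1) 0

/-- a permutation of `Fin n` as a map on `ℕ`. -/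
def pv {n : ℕ} (σ : Equiv.Perm (Fin n)) (m : ℕ) : ℕ := if h : m < n then (σ ⟨m, h⟩ : ℕ) else m

/-- `σ` is a cyclic permutation of `{0,…,n-1}` (a single `n`-cycle). -/
def IsCyclic' {n : ℕ} (σ : Equiv.Perm (Fin n)) : Prop := ∀ i j : Fin n, ∃ k : ℕ, (σ ^ k) i = j

/-- `σ = T̃` is compatible with `T`: `T(α_a) = α_b` implies `T̃ a = b` and `T̃ (a+1) = b+1`. -/
def Compat {n : ℕ} (D : BDTriple n) (σ : Equiv.Perm (Fin n)) : Prop :=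
  ∀ a ∈ D.G1, pv σ a = D.T a ∧ pv σ (a + 1) = D.T a + 1

/-- `OO i j` is the least `k ≥ 0` with `T̃^k i = j`. -/
def OSpec {n : ℕ} (σ : Equiv.Perm (Fin n)) (OO : ℕ → ℕ → ℕ) : Prop :=
  ∀ i j : ℕ, i < n → j < n →
    (pv σ)^[OO i j] i = j ∧ ∀ m < OO i j, (pv σ)^[m] i ≠ j

/-- the finset of positive roots. -/
def roots (n : ℕ) : Finset (ℕ × ℕ) :=
  (Finset.range n ×ˢ Finset.range n).filter fun p => p.1 < p.2

open scoped Classical in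
/-- the finset of pairs `(α, β)` of positive roots with `α ≺ β`. -/
noncomputable def precPairs {n : ℕ} (D : BDTriple n) : Finset ((ℕ × ℕ) × (ℕ × ℕ)) :=
  (roots n ×ˢ roots n).filter fun x => prec D x.1 x.2

/-- the standard part `r_st = ½ Σ_i e_ii ⊗ e_ii + Σ_{α>0} e_{-α} ⊗ e_α`. -/
noncomputable def rstMat (n : ℕ) : M2 n :=
  (1 / 2 : ℂ) • ∑ i ∈ Finset.range n, tens (Eu n i i) (Eu n i i)
    + ∑ p ∈ roots n, tens (Eu n p.2 p.1) (Eu n p.1 p.2)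

/-- `a = Σ_{α≺β} (-1)^{C_{α,β}(|α|-1)} (e_{-α} ⊗ e_β - e_β ⊗ e_{-α})`. -/
noncomputable def aMat {n : ℕ} (D : BDTriple n) (CC : ℕ × ℕ → ℕ × ℕ → Bool) : M2 n :=
  ∑ x ∈ precPairs D,
    ((-1 : ℂ) ^ Cnum CC x.1 x.2) •
      (tens (Eu n x.1.2 x.1.1) (Eu n x.2.1 x.2.2) - tens (Eu n x.2.1 x.2.2) (Eu n x.1.2 x.1.1))

/-- the diagonal part `s = Σ_{i,k} s_{ik} e_ii ⊗ e_kk` as an element of `h ⊗ h`. -/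
noncomputable def sMat (n : ℕ) (s : ℕ → ℕ → ℂ) : M2 n :=
  ∑ i ∈ Finset.range n, ∑ k ∈ Finset.range n, s i k • tens (Eu n i i) (Eu n k k)

/-- `s ∈ h ∧ h` satisfies the Belavin–Drinfeld equations
`[(α - Tα) ⊗ 1] s = ½ [(α + Tα) ⊗ 1] P⁰` for all `α ∈ Γ₁`. -/
def Admissible {n : ℕ} (D : BDTriple n) (s : ℕ → ℕ → ℂ) : Prop :=
  (∀ i k : ℕ, s k i = - s i k) ∧
  ∀ a ∈ D.G1, ∀ k < n,
    (s a k - s (a + 1) k) - (s (D.T a) k - s (D.T a + 1) k)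
      = (1 / 2 : ℂ) * ((if a = k then 1 else 0) - (if a + 1 = k then 1 else 0)
          + (if D.T a = k then 1 else 0) - (if D.T a + 1 = k then 1 else 0))

/-- the classical `r`-matrix `r_{T,s} = s + a + r_st`. -/
noncomputable def rTs {n : ℕ} (D : BDTriple n) (CC : ℕ × ℕ → ℕ × ℕ → Bool)
    (s : ℕ → ℕ → ℂ) : M2 n :=
  sMat n s + aMat D CC + rstMat n

open scoped Classical in
/-- the combinatorial constant `PS(α, β)`. -/
noncomputable def PS {n : ℕ} (D : BDTriple n) (p q : ℕ × ℕ) : ℂ :=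
  (1 / 2 : ℂ) * ((if p.2 = q.1 then 1 else 0) + (if q.2 = p.1 then 1 else 0))
    + (if ∃ g : ℕ × ℕ, prec D p g ∧ prec D g q ∧ p.2 = g.1 then 1 else 0)
    + (if ∃ g : ℕ × ℕ, prec D p g ∧ prec D g q ∧ g.2 = p.1 then 1 else 0)

/-- `q^x = e^{ux/2}` where `q = e^{u/2}`. -/
noncomputable def qp (u x : ℂ) : ℂ := Complex.exp (u * x / 2)

/-- `q^M = e^{(u/2)M}` for a diagonal `M ∈ h ⊗ h` with entries `f i k`. -/
noncomputable def qMat (n : ℕ) (u : ℂ) (f : ℕ → ℕ → ℂ) : M2 n :=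
  fun p q => if p = q then Complex.exp (u / 2 * f p.1 p.2) else 0

/-- the standard quantum `R`-matrix `R_st`. -/
noncomputable def RstMat (n : ℕ) (u : ℂ) : M2 n :=
  qp u 1 • ∑ i ∈ Finset.range n, tens (Eu n i i) (Eu n i i)
    + ∑ i ∈ Finset.range n, ∑ j ∈ Finset.range n,
        (if i ≠ j then (1 : ℂ) else 0) • tens (Eu n i i) (Eu n j j)
    + (qp u 1 - qp u (-1)) • ∑ p ∈ roots n, tens (Eu n p.2 p.1) (Eu n p.1 p.2)

/-- the GGS matrix `R_GGS(q)`, `q = e^{u/2}`. -/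
noncomputable def RGGS {n : ℕ} (D : BDTriple n) (CC : ℕ × ℕ → ℕ × ℕ → Bool)
    (s : ℕ → ℕ → ℂ) (u : ℂ) : M2 n :=
  qMat n u s *
    (RstMat n u + (qp u 1 - qp u (-1)) •
      ∑ x ∈ precPairs D,
        ((-1 : ℂ) ^ Cnum CC x.1 x.2) •
          (qp u (-(Cnum CC x.1 x.2 : ℂ) - PS D x.1 x.2) •
              tens (Eu n x.1.2 x.1.1) (Eu n x.2.1 x.2.2)
            - qp u ((Cnum CC x.1 x.2 : ℂ) + PS D x.1 x.2) •
              tens (Eu n x.2.1 x.2.2) (Eu n x.1.2 x.1.1))) *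
  qMat n u s

/-- the coefficients of `(pr ⊗ pr) s` for `s ∈ h ⊗ h`. -/
noncomputable def s0fun (n : ℕ) (s : ℕ → ℕ → ℂ) (i k : ℕ) : ℂ :=
  s i k - (1 / (n : ℂ)) * (∑ m ∈ Finset.range n, s m k)
    - (1 / (n : ℂ)) * (∑ m ∈ Finset.range n, s i m)
    + (1 / (n : ℂ)) ^ 2 * ∑ m ∈ Finset.range n, ∑ l ∈ Finset.range n, s m l

/-! ### Auxiliary development for Statement 4 -/

section BDAux

variable {n : ℕ} {D : BDTriple n}

/-- a step preserves the length of a root. -/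
lemma BD_step_len {p q : ℕ × ℕ} (h : step D p q) : q.2 - q.1 = p.2 - p.1 := by
  have hinj : Set.InjOn D.T ↑(Finset.Ico p.1 p.2) := by
    intro x hx y hy hxy
    exact D.Tinj x (h.2.2.1 (Finset.mem_coe.mp hx)) y (h.2.2.1 (Finset.mem_coe.mp hy)) hxy
  have hcard := Finset.card_image_of_injOn hinj
  rw [h.2.2.2, Nat.card_Ico, Nat.card_Ico] at hcard
  exact hcard

/-- steps are deterministic. -/
lemma BD_step_det {p q q' : ℕ × ℕ} (h : step D p q) (h' : step D p q') : q = q' := by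
  have hico : Finset.Ico q.1 q.2 = Finset.Ico q'.1 q'.2 := by rw [← h.2.2.2, ← h'.2.2.2]
  have hq := h.2.1
  have hq' := h'.2.1
  have m1 : q.1 ∈ Finset.Ico q'.1 q'.2 := by
    rw [← hico]; exact Finset.mem_Ico.mpr ⟨le_refl _, hq.1⟩
  have m2 : q'.1 ∈ Finset.Ico q.1 q.2 := by
    rw [hico]; exact Finset.mem_Ico.mpr ⟨le_refl _, hq'.1⟩
  have h1 : q.1 = q'.1 :=
    le_antisymm (Finset.mem_Ico.mp m2).1 (Finset.mem_Ico.mp m1).1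
  have hl := BD_step_len h
  have hl' := BD_step_len h'
  have hlt := hq.1
  have hlt' := hq'.1
  exact Prod.ext h1 (by omega)

open scoped Classical in
/-- the (classically chosen) successor of a root under `T`. -/
noncomputable def nextR (D : BDTriple n) (p : ℕ × ℕ) : ℕ × ℕ :=
  if h : ∃ q, step D p q then h.choose else p

lemma nextR_eq {p q : ℕ × ℕ} (h : step D p q) : nextR D p = q := by
  have he : ∃ q, step D p q := ⟨q, h⟩
  unfold nextR
  rw [dif_pos he]
  exact BD_step_det he.choose_spec h

/-- the canonical `T`-chain starting at `p`. -/
noncomputable def BDchain (D : BDTriple n) (p : ℕ × ℕ) (j : ℕ) : ℕ × ℕ := (nextR D)^[j] p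

lemma BDchain_zero (p : ℕ × ℕ) : BDchain D p 0 = p := rfl

/-- `stepIter` is realized by the canonical chain. -/
lemma stepIter_chain : ∀ {m : ℕ} {p q : ℕ × ℕ}, stepIter D m p q →
    q = BDchain D p m ∧ ∀ j < m, step D (BDchain D p j) (BDchain D p (j + 1)) := by
  intro m
  induction m with
  | zero =>
    intro p q h
    have h' : p = q := h
    exact ⟨h'.symm, fun j hj => absurd hj (by omega)⟩
  | succ m ih =>
    intro p q h
    obtain ⟨r, hpr, hit⟩ := h
    have hr : nextR D p = r := nextR_eq hpr
    obtain ⟨hq', hsteps'⟩ := ih hit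
    have e : ∀ j, BDchain D p (j + 1) = BDchain D r j := by
      intro j
      show (nextR D)^[j + 1] p = (nextR D)^[j] r
      rw [Function.iterate_succ_apply, hr]
    constructor
    · rw [e m]; exact hq'
    · intro j hj
      cases j with
      | zero =>
        have e0 : BDchain D p 1 = r := e 0
        show step D p (BDchain D p 1)
        rw [e0]; exact hpr
      | succ j =>
        have hst := hsteps' j (by omega)
        rw [← e j, ← e (j + 1)] at hst
        exact hst

/-- assembling single steps into `stepIter`. -/
lemma steps_to_stepIter (f : ℕ → ℕ × ℕ) :
    ∀ k i, (∀ j < k, step D (f (i + j)) (f (i + j + 1))) → stepIter D k (f i) (f (i + k)) := by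
  intro k
  induction k with
  | zero =>
    intro i _
    show f i = f (i + 0)
    rw [Nat.add_zero]
  | succ k ih =>
    intro i h
    have h0 : step D (f i) (f (i + 1)) := by simpa using h 0 (Nat.succ_pos k)
    have h1 := ih (i + 1) (fun j hj => by
      have hh := h (j + 1) (by omega)
      have e1 : i + (j + 1) = i + 1 + j := by omega
      rw [e1] at hh
      exact hh)
    have h2 : i + 1 + k = i + (k + 1) := by omega
    exact ⟨f (i + 1), h0, h2 ▸ h1⟩

/-- there are no cycles (consequence of `Tnil`). -/
lemma BD_no_cycle {p : ℕ × ℕ} {m : ℕ} (hm : 1 ≤ m) (h : stepIter D m p p) : False := by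
  obtain ⟨hq, hsteps⟩ := stepIter_chain h
  have hper : ∀ j, BDchain D p (j + m) = BDchain D p j := by
    intro j
    show (nextR D)^[j + m] p = (nextR D)^[j] p
    rw [Function.iterate_add_apply]
    exact congrArg _ hq.symm
  have hper' : ∀ a r, BDchain D p (r + a * m) = BDchain D p r := by
    intro a
    induction a with
    | zero => intro r; simp
    | succ a ih =>
      intro r
      rw [show r + (a + 1) * m = r + a * m + m by ring, hper, ih]
  have hstepsAll : ∀ j, step D (BDchain D p j) (BDchain D p (j + 1)) := by
    intro j
    have hd := Nat.mod_add_div' j m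
    have h1 : BDchain D p j = BDchain D p (j % m) := by
      conv_lhs => rw [show j = j % m + j / m * m from hd.symm]
      exact hper' _ _
    have h2 : BDchain D p (j + 1) = BDchain D p (j % m + 1) := by
      have e : j + 1 = (j % m + 1) + j / m * m := by
        rw [Nat.add_right_comm, hd]
      conv_lhs => rw [e]
      exact hper' _ _
    rw [h1, h2]
    exact hsteps _ (Nat.mod_lt _ (by omega))
  have hroot0 : p.1 < p.2 := (hsteps 0 hm).1.1
  have hmem : ∀ j, D.T^[j] p.1 ∈ Finset.Ico (BDchain D p j).1 (BDchain D p j).2 := by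
    intro j
    induction j with
    | zero =>
      have e0 : BDchain D p 0 = p := rfl
      rw [e0]
      exact Finset.mem_Ico.mpr ⟨le_refl _, hroot0⟩
    | succ j ih =>
      have hst := hstepsAll j
      have hmem' := Finset.mem_image_of_mem D.T ih
      rw [hst.2.2.2] at hmem'
      rw [Function.iterate_succ_apply']
      exact hmem'
  have hG1 : ∀ j, D.T^[j] p.1 ∈ D.G1 := fun j => (hstepsAll j).2.2.1 (hmem j)
  obtain ⟨k, hk⟩ := D.Tnil p.1 (by simpa using hG1 0)
  exact hk (hG1 k)

/-- the canonical chain never repeats. -/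
lemma BDchain_ne {p : ℕ × ℕ} {m : ℕ}
    (hsteps : ∀ j < m, step D (BDchain D p j) (BDchain D p (j + 1)))
    {i j : ℕ} (hij : i < j) (hjm : j ≤ m) : BDchain D p i ≠ BDchain D p j := by
  intro he
  have hit : stepIter D (j - i) (BDchain D p i) (BDchain D p (i + (j - i))) :=
    steps_to_stepIter (BDchain D p) (j - i) i (fun l hl => hsteps (i + l) (by omega))
  rw [show i + (j - i) = j by omega, ← he] at hit
  exact BD_no_cycle (by omega) hit

/-- `(e_{p.1} - e_{p.2}) ⊗ 1` contracted against `s`, evaluated at `k`. -/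
def Fc (s : ℕ → ℕ → ℂ) (p : ℕ × ℕ) (k : ℕ) : ℂ := s p.1 k - s p.2 k

/-- the root `e_{p.1} - e_{p.2}` as a functional, evaluated at `k`. -/
def chiR (p : ℕ × ℕ) (k : ℕ) : ℂ :=
  (if p.1 = k then 1 else 0) - (if p.2 = k then 1 else 0)

lemma BD_telesc (f : ℕ → ℂ) {i j : ℕ} (h : i ≤ j) :
    ∑ a ∈ Finset.Ico i j, (f a - f (a + 1)) = f i - f j := by
  induction j, h using Nat.le_induction with
  | base => simp
  | succ j hij ih => rw [Finset.sum_Ico_succ_top hij, ih]; ring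

/-- one-step consequence of admissibility. -/
lemma BD_step_F {s : ℕ → ℕ → ℂ} (hs : Admissible D s)
    {p q : ℕ × ℕ} (h : step D p q) {k : ℕ} (hk : k < n) :
    Fc s p k - Fc s q k = (1 / 2 : ℂ) * (chiR p k + chiR q k) := by
  have hsub := h.2.2.1
  have himg := h.2.2.2
  have hple : p.1 ≤ p.2 := le_of_lt h.1.1
  have hqle : q.1 ≤ q.2 := le_of_lt h.2.1.1
  have key : ∑ a ∈ Finset.Ico p.1 p.2,
      ((s a k - s (a + 1) k) - (s (D.T a) k - s (D.T a + 1) k))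
      = ∑ a ∈ Finset.Ico p.1 p.2, ((1 / 2 : ℂ) *
          ((if a = k then 1 else 0) - (if a + 1 = k then 1 else 0)
            + (if D.T a = k then 1 else 0) - (if D.T a + 1 = k then 1 else 0))) :=
    Finset.sum_congr rfl (fun a ha => hs.2 a (hsub ha) k hk)
  have hinj : ∀ x ∈ Finset.Ico p.1 p.2, ∀ y ∈ Finset.Ico p.1 p.2, D.T x = D.T y → x = y :=
    fun x hx y hy hxy => D.Tinj x (hsub hx) y (hsub hy) hxy
  have himgsum : ∀ g : ℕ → ℂ,
      ∑ b ∈ Finset.Ico q.1 q.2, g b = ∑ a ∈ Finset.Ico p.1 p.2, g (D.T a) := by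
    intro g
    rw [← himg]
    exact Finset.sum_image hinj
  have e1 : ∑ a ∈ Finset.Ico p.1 p.2, (s a k - s (a + 1) k) = Fc s p k :=
    BD_telesc (fun a => s a k) hple
  have e2' : ∑ b ∈ Finset.Ico q.1 q.2, (s b k - s (b + 1) k)
      = ∑ a ∈ Finset.Ico p.1 p.2, (s (D.T a) k - s (D.T a + 1) k) :=
    himgsum (fun b => s b k - s (b + 1) k)
  have e2 : ∑ a ∈ Finset.Ico p.1 p.2, (s (D.T a) k - s (D.T a + 1) k) = Fc s q k := by
    rw [← e2']
    exact BD_telesc (fun b => s b k) hqle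
  have e3 : ∑ a ∈ Finset.Ico p.1 p.2,
      ((if a = k then (1 : ℂ) else 0) - (if a + 1 = k then 1 else 0)) = chiR p k :=
    BD_telesc (fun a => if a = k then (1 : ℂ) else 0) hple
  have e4' : ∑ b ∈ Finset.Ico q.1 q.2,
      ((if b = k then (1 : ℂ) else 0) - (if b + 1 = k then 1 else 0))
      = ∑ a ∈ Finset.Ico p.1 p.2,
          ((if D.T a = k then (1 : ℂ) else 0) - (if D.T a + 1 = k then 1 else 0)) :=
    himgsum (fun b => (if b = k then (1 : ℂ) else 0) - (if b + 1 = k then 1 else 0))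
  have e4 : ∑ a ∈ Finset.Ico p.1 p.2,
      ((if D.T a = k then (1 : ℂ) else 0) - (if D.T a + 1 = k then 1 else 0)) = chiR q k := by
    rw [← e4']
    exact BD_telesc (fun b => if b = k then (1 : ℂ) else 0) hqle
  rw [Finset.sum_sub_distrib, e1, e2] at key
  rw [key, ← Finset.mul_sum]
  congr 1
  rw [← e3, ← e4, ← Finset.sum_add_distrib]
  exact Finset.sum_congr rfl (fun a _ => by ring)

/-- telescoped consequence of admissibility along a chain. -/
lemma BD_chain_F {s : ℕ → ℕ → ℂ} (hs : Admissible D s) (γ : ℕ → ℕ × ℕ) :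
    ∀ m, (∀ j < m, step D (γ j) (γ (j + 1))) → ∀ k, k < n →
      Fc s (γ 0) k - Fc s (γ m) k
        = ∑ j ∈ Finset.range m, (1 / 2 : ℂ) * (chiR (γ j) k + chiR (γ (j + 1)) k) := by
  intro m
  induction m with
  | zero => intro _ k _; simp
  | succ m ih =>
    intro h k hk
    rw [Finset.sum_range_succ, ← ih (fun j hj => h j (by omega)) k hk,
      ← BD_step_F hs (h m (by omega)) hk]
    ring

lemma BD_half_sum (γ : ℕ → ℕ × ℕ) (k : ℕ) :
    ∀ m, 1 ≤ m →
      ∑ j ∈ Finset.range m, (1 / 2 : ℂ) * (chiR (γ j) k + chiR (γ (j + 1)) k)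
        = (1 / 2 : ℂ) * chiR (γ 0) k + (1 / 2 : ℂ) * chiR (γ m) k
          + ∑ j ∈ Finset.Ico 1 m, chiR (γ j) k := by
  intro m hm
  induction m, hm using Nat.le_induction with
  | base => simp [Finset.sum_range_one]; ring
  | succ m hm ih =>
    rw [Finset.sum_range_succ, ih, Finset.sum_Ico_succ_top hm]
    ring

/-- inner product of two distinct roots of equal length. -/
lemma BD_ip_eq {x y : ℕ × ℕ} (hx : x.1 < x.2) (hy : y.1 < y.2)
    (hlen : x.2 - x.1 = y.2 - y.1) (hne : x ≠ y) :
    chiR x y.1 - chiR x y.2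
      = -((if x.2 = y.1 then (1 : ℂ) else 0) + (if x.1 = y.2 then 1 else 0)) := by
  have h11 : x.1 ≠ y.1 := by
    intro h
    exact hne (Prod.ext h (by omega))
  have h22 : x.2 ≠ y.2 := by
    intro h
    exact hne (Prod.ext (by omega) h)
  simp only [chiR, if_neg h11, if_neg h22]
  ring

end BDAux

/-- For a BD triple with admissible `s` and `α ≺ β`,
`PS(α,β) = 1 - (α ⊗ β) s`. -/
theorem PS_eq_one_sub_contraction (n : ℕ) (hn : 2 ≤ n) (D : BDTriple n)
    (s : ℕ → ℕ → ℂ) (hs : Admissible D s)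
    (p q : ℕ × ℕ) (hp : IsRoot n p) (hq : IsRoot n q) (hpq : prec D p q) :
    PS D p q = 1 - (s p.1 q.1 - s p.1 q.2 - s p.2 q.1 + s p.2 q.2) := by
  classical
  obtain ⟨m', hit⟩ := hpq
  obtain ⟨hqc, hsteps⟩ := stepIter_chain hit
  set m := m' + 1 with hmdef
  have hm1 : 1 ≤ m := by omega
  have chm : BDchain D p m = q := hqc.symm
  have ch0 : BDchain D p 0 = p := rfl
  have hplt : p.1 < p.2 := hp.1
  -- roots and lengths along the chain
  have hroot : ∀ j, j ≤ m → IsRoot n (BDchain D p j) := by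
    intro j hj
    rcases Nat.lt_or_ge j m with h | h
    · exact (hsteps j h).1
    · have hjm : j = m := le_antisymm hj h
      rw [hjm, chm]; exact hq
  have hlen : ∀ j, j ≤ m → (BDchain D p j).2 - (BDchain D p j).1 = p.2 - p.1 := by
    intro j
    induction j with
    | zero => intro _; rw [ch0]
    | succ j ih =>
      intro hj
      rw [BD_step_len (hsteps j (by omega))]
      exact ih (by omega)
  have hne : ∀ j, 1 ≤ j → j ≤ m → BDchain D p j ≠ p := by
    intro j h1 h2 he
    exact BDchain_ne hsteps (show 0 < j from h1) h2 (ch0.trans he.symm)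
  have hqp : q ≠ p := by
    intro he
    exact BDchain_ne hsteps (show (0 : ℕ) < m from hm1) le_rfl
      (ch0.trans (he.symm.trans chm.symm))
  have hchain_inj : ∀ b, 1 ≤ b → b < m → ∀ c, 1 ≤ c → c < m →
      BDchain D p b = BDchain D p c → b = c := by
    intro b hb1 hb2 c hc1 hc2 he
    rcases lt_trichotomy b c with h | h | h
    · exact absurd he (BDchain_ne hsteps h (le_of_lt hc2))
    · exact h
    · exact absurd he.symm (BDchain_ne hsteps h (le_of_lt hb2))
  -- characterization of intermediate roots
  have factE : ∀ C : ℕ × ℕ → Prop, (∃ g, prec D p g ∧ prec D g q ∧ C g) ↔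
      ∃ j, 1 ≤ j ∧ j < m ∧ C (BDchain D p j) := by
    intro C
    constructor
    · rintro ⟨g, ⟨k1, hk1⟩, ⟨k2, hk2⟩, hC⟩
      obtain ⟨hg, hsteps1⟩ := stepIter_chain hk1
      obtain ⟨hq2, hsteps2⟩ := stepIter_chain hk2
      have e : ∀ l, BDchain D p (k1 + 1 + l) = BDchain D g l := by
        intro l
        rw [hg]
        show (nextR D)^[k1 + 1 + l] p = (nextR D)^[l] ((nextR D)^[k1 + 1] p)
        rw [Nat.add_comm (k1 + 1) l]
        exact Function.iterate_add_apply _ l (k1 + 1) p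
      have hstepsAll : ∀ j < k1 + 1 + (k2 + 1), step D (BDchain D p j) (BDchain D p (j + 1)) := by
        intro j hj
        rcases Nat.lt_or_ge j (k1 + 1) with h | h
        · exact hsteps1 j h
        · have h2 := hsteps2 (j - (k1 + 1)) (by omega)
          have e1 : BDchain D g (j - (k1 + 1)) = BDchain D p j := by
            rw [← e]; congr 1; omega
          have e2 : BDchain D g (j - (k1 + 1) + 1) = BDchain D p (j + 1) := by
            rw [← e]; congr 1; omega
          rwa [e1, e2] at h2
      have hqN : BDchain D p (k1 + 1 + (k2 + 1)) = q := by
        rw [e (k2 + 1)]; exact hq2.symm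
      have hlt : k1 + 1 < m := by
        by_contra hge
        push_neg at hge
        have hc : stepIter D (k1 + 1 + (k2 + 1) - m) (BDchain D p m)
            (BDchain D p (m + (k1 + 1 + (k2 + 1) - m))) :=
          steps_to_stepIter (BDchain D p) _ m (fun l hl => hstepsAll (m + l) (by omega))
        rw [show m + (k1 + 1 + (k2 + 1) - m) = k1 + 1 + (k2 + 1) by omega, hqN, chm] at hc
        exact BD_no_cycle (by omega) hc
      refine ⟨k1 + 1, by omega, hlt, ?_⟩
      rw [← hg]; exact hC
    · rintro ⟨j, hj1, hjm, hC⟩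
      refine ⟨BDchain D p j, ⟨j - 1, ?_⟩, ⟨m - j - 1, ?_⟩, hC⟩
      · have h0 := steps_to_stepIter (BDchain D p) j 0 (fun l hl => by
          simpa using hsteps l (by omega))
        rw [show j - 1 + 1 = j by omega]
        simpa [ch0] using h0
      · have h0 := steps_to_stepIter (BDchain D p) (m - j) j (fun l hl => hsteps (j + l) (by omega))
        rw [show j + (m - j) = m by omega, chm] at h0
        rw [show m - j - 1 + 1 = m - j by omega]
        exact h0
  -- analytic identities
  have hA := BD_chain_F hs (BDchain D p) m hsteps p.1 (lt_trans hp.1 hp.2)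
  have hB := BD_chain_F hs (BDchain D p) m hsteps p.2 hp.2
  rw [BD_half_sum (BDchain D p) p.1 m hm1, ch0, chm] at hA
  rw [BD_half_sum (BDchain D p) p.2 m hm1, ch0, chm] at hB
  have c1 : chiR p p.1 = 1 := by
    have hne' : p.2 ≠ p.1 := by omega
    simp [chiR, hne']
  have c2 : chiR p p.2 = -1 := by
    have hne' : p.1 ≠ p.2 := by omega
    simp [chiR, hne']
  have cm : chiR q p.1 - chiR q p.2
      = -((if q.2 = p.1 then (1 : ℂ) else 0) + (if q.1 = p.2 then 1 else 0)) := by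
    refine BD_ip_eq hq.1 hp.1 ?_ hqp
    have := hlen m le_rfl
    rwa [chm] at this
  have SD : ∑ j ∈ Finset.Ico 1 m, chiR (BDchain D p j) p.1
        - ∑ j ∈ Finset.Ico 1 m, chiR (BDchain D p j) p.2
      = (0 - ∑ j ∈ Finset.Ico 1 m, (if (BDchain D p j).2 = p.1 then (1 : ℂ) else 0))
        - ∑ j ∈ Finset.Ico 1 m, (if (BDchain D p j).1 = p.2 then (1 : ℂ) else 0) := by
    rw [← Finset.sum_sub_distrib]
    have hcongr : ∀ j ∈ Finset.Ico 1 m,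
        chiR (BDchain D p j) p.1 - chiR (BDchain D p j) p.2
          = (0 - (if (BDchain D p j).2 = p.1 then (1 : ℂ) else 0))
            - (if (BDchain D p j).1 = p.2 then (1 : ℂ) else 0) := by
      intro j hj
      rw [Finset.mem_Ico] at hj
      have hr := hroot j (le_of_lt hj.2)
      rw [BD_ip_eq hr.1 hp.1 (hlen j (le_of_lt hj.2)) (hne j hj.1 (le_of_lt hj.2))]
      ring
    rw [Finset.sum_congr rfl hcongr, Finset.sum_sub_distrib, Finset.sum_sub_distrib,
      Finset.sum_const_zero]
  have hTgt : s p.1 q.1 - s p.1 q.2 - s p.2 q.1 + s p.2 q.2 = -(Fc s q p.1 - Fc s q p.2) := by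
    unfold Fc
    linear_combination hs.1 p.1 q.1 - hs.1 p.1 q.2 - hs.1 p.2 q.1 + hs.1 p.2 q.2
  have hz : Fc s p p.1 - Fc s p p.2 = 0 := by
    unfold Fc
    linear_combination (1 / 2 : ℂ) * hs.1 p.1 p.1 + (1 / 2 : ℂ) * hs.1 p.2 p.2 - hs.1 p.1 p.2
  -- existential indicators as sums
  have g1 : (if ∃ g : ℕ × ℕ, prec D p g ∧ prec D g q ∧ p.2 = g.1 then (1 : ℂ) else 0)
      = ∑ j ∈ Finset.Ico 1 m, (if (BDchain D p j).1 = p.2 then (1 : ℂ) else 0) := by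
    by_cases h : ∃ g : ℕ × ℕ, prec D p g ∧ prec D g q ∧ p.2 = g.1
    · obtain ⟨j₀, hj₁, hj₂, hc⟩ := (factE _).mp h
      have hzero : ∀ b ∈ Finset.Ico 1 m, b ≠ j₀ →
          (if (BDchain D p b).1 = p.2 then (1 : ℂ) else 0) = 0 := by
        intro b hb hbne
        rw [Finset.mem_Ico] at hb
        refine if_neg (fun hcb => hbne ?_)
        have hr1 := (hroot b (le_of_lt hb.2)).1
        have hr2 := (hroot j₀ (le_of_lt hj₂)).1
        have hl1 := hlen b (le_of_lt hb.2)
        have hl2 := hlen j₀ (le_of_lt hj₂)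
        exact hchain_inj b hb.1 hb.2 j₀ hj₁ hj₂ (Prod.ext (by omega) (by omega))
      rw [if_pos h, Finset.sum_eq_single_of_mem j₀ (Finset.mem_Ico.mpr ⟨hj₁, hj₂⟩) hzero,
        if_pos hc.symm]
    · rw [if_neg h]
      refine (Finset.sum_eq_zero fun b hb => ?_).symm
      rw [Finset.mem_Ico] at hb
      refine if_neg (fun hcb => h ?_)
      exact (factE _).mpr ⟨b, hb.1, hb.2, hcb.symm⟩
  have g2 : (if ∃ g : ℕ × ℕ, prec D p g ∧ prec D g q ∧ g.2 = p.1 then (1 : ℂ) else 0)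
      = ∑ j ∈ Finset.Ico 1 m, (if (BDchain D p j).2 = p.1 then (1 : ℂ) else 0) := by
    by_cases h : ∃ g : ℕ × ℕ, prec D p g ∧ prec D g q ∧ g.2 = p.1
    · obtain ⟨j₀, hj₁, hj₂, hc⟩ := (factE _).mp h
      have hzero : ∀ b ∈ Finset.Ico 1 m, b ≠ j₀ →
          (if (BDchain D p b).2 = p.1 then (1 : ℂ) else 0) = 0 := by
        intro b hb hbne
        rw [Finset.mem_Ico] at hb
        refine if_neg (fun hcb => hbne ?_)
        have hr1 := (hroot b (le_of_lt hb.2)).1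
        have hr2 := (hroot j₀ (le_of_lt hj₂)).1
        have hl1 := hlen b (le_of_lt hb.2)
        have hl2 := hlen j₀ (le_of_lt hj₂)
        exact hchain_inj b hb.1 hb.2 j₀ hj₁ hj₂ (Prod.ext (by omega) (by omega))
      rw [if_pos h, Finset.sum_eq_single_of_mem j₀ (Finset.mem_Ico.mpr ⟨hj₁, hj₂⟩) hzero,
        if_pos hc]
    · rw [if_neg h]
      refine (Finset.sum_eq_zero fun b hb => ?_).symm
      rw [Finset.mem_Ico] at hb
      refine if_neg (fun hcb => h ?_)
      exact (factE _).mpr ⟨b, hb.1, hb.2, hcb⟩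
  have d1 : (if p.2 = q.1 then (1 : ℂ) else 0) = (if q.1 = p.2 then 1 else 0) := by
    by_cases h : p.2 = q.1
    · rw [if_pos h, if_pos h.symm]
    · rw [if_neg h, if_neg (fun hh => h hh.symm)]
  unfold PS
  rw [g1, g2, d1]
  linear_combination hA - hB - hz + hTgt + (1 / 2 : ℂ) * c1 - (1 / 2 : ℂ) * c2
    + (1 / 2 : ℂ) * cm + SD
end

section
/- Let r : ℂ×ℂ → A⊗A be a solution of the AYBE and Φ ∈ A a diagonal matrix such that Φ⊗1 + 1⊗Φ commutes with r(u,v) for all u, v. Then r′(u,v) = (1⊗e^{−uΦ})·r(u,v)·(e^{uΦ}⊗1) also satisfies the AYBE; moreover, if r is unitary then so is r′. -/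
open Complex

/-- the diagonal matrix `Φ ⊗ 1` for a diagonal `Φ ∈ h`. -/
def diagL (n : ℕ) (Φ : Fin n → ℂ) : M2 n := fun p q => if p = q then Φ p.1 else 0
/-- the diagonal matrix `1 ⊗ Φ` for a diagonal `Φ ∈ h`. -/
def diagR (n : ℕ) (Φ : Fin n → ℂ) : M2 n := fun p q => if p = q then Φ p.2 else 0
/-- the diagonal matrix `1 ⊗ e^{-uΦ}`. -/
noncomputable def expPhiRight (n : ℕ) (u : ℂ) (Φ : Fin n → ℂ) : M2 n :=
  fun p q => if p = q then Complex.exp (-(u * Φ p.2)) else 0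
/-- the diagonal matrix `e^{uΦ} ⊗ 1`. -/
noncomputable def expPhiLeft (n : ℕ) (u : ℂ) (Φ : Fin n → ℂ) : M2 n :=
  fun p q => if p = q then Complex.exp (u * Φ p.1) else 0

section Aux

variable {n : ℕ} (Φ : Fin n → ℂ) (r : ℂ → ℂ → M2 n)

lemma myDiagSum : diagL n Φ + diagR n Φ = Matrix.diagonal (fun p => Φ p.1 + Φ p.2) := by
  ext p q
  by_cases h : p = q <;> simp [diagL, diagR, Matrix.diagonal, h]

lemma myCons
    (hcomm : ∀ u v : ℂ, (diagL n Φ + diagR n Φ) * r u v = r u v * (diagL n Φ + diagR n Φ))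
    (u v : ℂ) (p q : Fin n × Fin n) :
    r u v p q = 0 ∨ Φ p.1 + Φ p.2 = Φ q.1 + Φ q.2 := by
  have h := congrFun (congrFun (hcomm u v) p) q
  rw [myDiagSum, Matrix.diagonal_mul, Matrix.mul_diagonal] at h
  by_cases hr : r u v p q = 0
  · exact Or.inl hr
  · right
    rw [mul_comm] at h
    exact mul_right_cancel₀ hr (by linear_combination h)

lemma myTw (M : M2 n) (u : ℂ) (p q : Fin n × Fin n) :
    (expPhiRight n u Φ * M * expPhiLeft n u Φ) p q
      = Complex.exp (-(u * Φ p.2)) * M p q * Complex.exp (u * Φ q.1) := by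
  have h1 : expPhiRight n u Φ = Matrix.diagonal (fun p => Complex.exp (-(u * Φ p.2))) := by
    ext a b; by_cases h : a = b <;> simp [expPhiRight, Matrix.diagonal, h]
  have h2 : expPhiLeft n u Φ = Matrix.diagonal (fun p => Complex.exp (u * Φ p.1)) := by
    ext a b; by_cases h : a = b <;> simp [expPhiLeft, Matrix.diagonal, h]
  rw [h1, h2, Matrix.mul_diagonal, Matrix.diagonal_mul]

variable (hcomm : ∀ u v : ℂ, (diagL n Φ + diagR n Φ) * r u v = r u v * (diagL n Φ + diagR n Φ))

/-- the common exponential factor -/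
noncomputable def myF (u u' : ℂ) (p q : Fin n × Fin n × Fin n) : ℂ :=
  Complex.exp (-(u' * Φ p.1) + u' * Φ q.2.1 - (u + u') * Φ p.2.2 + (u + u') * Φ q.1)

lemma myShuffle (a b c d x y : ℂ) :
    Complex.exp a * x * Complex.exp b * 1 * (Complex.exp c * y * Complex.exp d * 1)
      = Complex.exp (a + b + c + d) * (x * 1 * (y * 1)) := by
  rw [Complex.exp_add, Complex.exp_add, Complex.exp_add]; ring

include hcomm in
lemma myT1 (u u' v v' : ℂ) (p q : Fin n × Fin n × Fin n) :
    (emb12 (expPhiRight n (-u') Φ * r (-u') v * expPhiLeft n (-u') Φ) *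
      emb13 (expPhiRight n (u + u') Φ * r (u + u') (v + v') * expPhiLeft n (u + u') Φ)) p q
    = myF Φ u u' p q * (emb12 (r (-u') v) * emb13 (r (u + u') (v + v'))) p q := by
  rw [Matrix.mul_apply, Matrix.mul_apply, Finset.mul_sum]
  apply Finset.sum_congr rfl
  intro k _
  simp only [emb12, emb13, myTw, myF]
  by_cases e1 : p.2.2 = k.2.2
  · by_cases e2 : k.2.1 = q.2.1
    · simp only [e1, e2, eq_self_iff_true, if_true]
      rcases myCons Φ r hcomm (-u') v (p.1, p.2.1) (k.1, q.2.1) with hz | h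
      · simp [hz]
      · rw [myShuffle]
        congr 2
        simp only at h ⊢
        linear_combination u' * h
    · simp [e2]
  · simp [e1]

include hcomm in
lemma myT2 (u u' v v' : ℂ) (p q : Fin n × Fin n × Fin n) :
    (emb23 (expPhiRight n (u + u') Φ * r (u + u') v' * expPhiLeft n (u + u') Φ) *
      emb12 (expPhiRight n u Φ * r u v * expPhiLeft n u Φ)) p q
    = myF Φ u u' p q * (emb23 (r (u + u') v') * emb12 (r u v)) p q := by
  rw [Matrix.mul_apply, Matrix.mul_apply, Finset.mul_sum]
  apply Finset.sum_congr rfl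
  intro k _
  simp only [emb23, emb12, myTw, myF]
  by_cases e1 : p.1 = k.1
  · by_cases e2 : k.2.2 = q.2.2
    · simp only [e1, e2, eq_self_iff_true, if_true]
      rcases myCons Φ r hcomm u v (k.1, k.2.1) (q.1, q.2.1) with hz | h
      · simp [hz]
      · rw [myShuffle]
        congr 2
        simp only at h ⊢
        linear_combination u' * h
    · simp [e2]
  · simp [e1]

include hcomm in
lemma myT3 (u u' v v' : ℂ) (p q : Fin n × Fin n × Fin n) :
    (emb13 (expPhiRight n u Φ * r u (v + v') * expPhiLeft n u Φ) *
      emb23 (expPhiRight n u' Φ * r u' v' * expPhiLeft n u' Φ)) p q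
    = myF Φ u u' p q * (emb13 (r u (v + v')) * emb23 (r u' v')) p q := by
  rw [Matrix.mul_apply, Matrix.mul_apply, Finset.mul_sum]
  apply Finset.sum_congr rfl
  intro k _
  simp only [emb13, emb23, myTw, myF]
  by_cases e1 : p.2.1 = k.2.1
  · by_cases e2 : k.1 = q.1
    · simp only [e1, e2, eq_self_iff_true, if_true]
      rcases myCons Φ r hcomm u (v + v') (p.1, p.2.2) (q.1, k.2.2) with hz | h
      · simp [hz]
      · rw [myShuffle]
        congr 2
        simp only at h ⊢
        linear_combination u' * h
    · simp [e2]
  · simp [e1]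

end Aux

/-- **Lemma `p12l`.** Twisting an AYBE solution `r` by
`r'(u,v) = (1 ⊗ e^{-uΦ}) r(u,v) (e^{uΦ} ⊗ 1)`, where `Φ` is diagonal and `Φ⊗1 + 1⊗Φ`
commutes with `r(u,v)`, again yields an AYBE solution; if `r` is unitary, so is `r'`. -/


theorem aybe_twist (n : ℕ) (hn : 2 ≤ n) (r : ℂ → ℂ → M2 n)
    (hAYBE : ∀ u u' v v' : ℂ, aybeLHS r u u' v v' = 0)
    (Φ : Fin n → ℂ)
    (hcomm : ∀ u v : ℂ, (diagL n Φ + diagR n Φ) * r u v = r u v * (diagL n Φ + diagR n Φ))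
    (r' : ℂ → ℂ → M2 n)
    (hr' : ∀ u v : ℂ, r' u v = expPhiRight n u Φ * r u v * expPhiLeft n u Φ) :
    (∀ u u' v v' : ℂ, aybeLHS r' u u' v v' = 0) ∧
    (Unitary2 r → Unitary2 r') := by
  constructor
  · intro u u' v v'
    ext p q
    have h := congrFun (congrFun (hAYBE u u' v v') p) q
    simp only [aybeLHS, Matrix.sub_apply, Matrix.add_apply, Matrix.zero_apply] at h ⊢
    rw [hr', hr', hr', hr', hr', hr', myT1 Φ r hcomm, myT2 Φ r hcomm, myT3 Φ r hcomm]
    linear_combination myF Φ u u' p q * h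
  · intro hU u v
    ext p q
    have hu := congrFun (congrFun (hU u v) p) q
    simp only [flipT, Matrix.neg_apply] at hu
    simp only [flipT, Matrix.neg_apply, hr', myTw]
    rw [hu]
    rcases myCons Φ r hcomm u v p q with hz | h
    · simp [hz]
    · have key : Complex.exp (-(-u * Φ p.1)) * Complex.exp (-u * Φ q.2)
          = Complex.exp (-(u * Φ p.2)) * Complex.exp (u * Φ q.1) := by
        rw [← Complex.exp_add, ← Complex.exp_add]
        congr 1
        linear_combination u * h
      linear_combination (-(r u v p q)) * key
end
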